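/- arXiv:1208.4736 — 2 statements merged into one kernel-verified Lean document; each statement's English description precedes it below -/
import Mathlib

section
/- Let A_1, A_2 > 0 and take (d_1,d_2) = (2,8), n = 10. On ℝ²×ℝ² define v(q) := e^{q_1 + 4q_2}, J(p) := (1/9)(p_1+p_2)² − p_1²/2 − p_2²/8, S(q) := A_1 e^{−q_1} + A_2 e^{−q_2}, the Ricci-flat Hamiltonian H(q,p) := v(q)^{-1}J(p) − S(q)v(q), and F(q,p) := −(1/72)(2p_1 − p_2)² e^{−q_1/2 − 7q_2} + A_1 e^{q_1/2 + q_2}. Then F is a generalized first integral of H: there exists a smooth function φ on ℝ²×ℝ² such that {F,H} = φ·H identically; in particular {F,H}(q,p) = 0 at every point (q,p) with H(q,p) = 0. -/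
/-- Partial derivative in the `i`-th `q`-coordinate. -/
noncomputable def pderivQ (F : (Fin 2 → ℝ) → (Fin 2 → ℝ) → ℝ) (i : Fin 2)
    (q p : Fin 2 → ℝ) : ℝ :=
  deriv (fun t => F (Function.update q i t) p) (q i)

/-- Partial derivative in the `i`-th `p`-coordinate. -/
noncomputable def pderivP (F : (Fin 2 → ℝ) → (Fin 2 → ℝ) → ℝ) (i : Fin 2)
    (q p : Fin 2 → ℝ) : ℝ :=
  deriv (fun t => F q (Function.update p i t)) (p i)

/-- Canonical Poisson bracket on `ℝ² × ℝ²`. -/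
noncomputable def poisson (F G : (Fin 2 → ℝ) → (Fin 2 → ℝ) → ℝ) (q p : Fin 2 → ℝ) : ℝ :=
  ∑ i : Fin 2, (pderivQ F i q p * pderivP G i q p - pderivP F i q p * pderivQ G i q p)

/-- The Ricci-flat Hamiltonian for `(d₁,d₂) = (2,8)`, `n = 10`:
`v(q) = e^{q₁+4q₂}`, `J(p) = (p₁+p₂)²/9 − p₁²/2 − p₂²/8`,
`S(q) = A₁e^{−q₁} + A₂e^{−q₂}`, `H = v⁻¹J − Sv`. -/
noncomputable def Ham (A1 A2 : ℝ) (q p : Fin 2 → ℝ) : ℝ :=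
  (Real.exp (q 0 + 4 * q 1))⁻¹ *
      ((1 / 9) * (p 0 + p 1) ^ 2 - (p 0) ^ 2 / 2 - (p 1) ^ 2 / 8) -
    (A1 * Real.exp (-(q 0)) + A2 * Real.exp (-(q 1))) * Real.exp (q 0 + 4 * q 1)

/-- The Dancer–Wang generalized first integral for `(d₁,d₂) = (2,8)`. -/
noncomputable def Fint (A1 : ℝ) (q p : Fin 2 → ℝ) : ℝ :=
  -(1 / 72) * (2 * p 0 - p 1) ^ 2 * Real.exp (-(q 0) / 2 - 7 * q 1) +
    A1 * Real.exp (q 0 / 2 + q 1)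

/-!
A direct computation of the eight partial derivatives shows `{F,H} = φ H` with
`φ = -(2p₁ - p₂) e^{-q₁/2 - 7q₂} / 36`. The kinetic terms and the `A₂`-terms match on the nose;
the `A₁`-terms cancel only because `e^{q₁/2 + q₂} v⁻¹ = e^{-q₁/2 - 7q₂} e^{-q₁} v`, the one
relation between the exponentials that the identity needs.
-/

open Real Function

def IsGeneralizedFirstIntegral (F H : (Fin 2 → ℝ) → (Fin 2 → ℝ) → ℝ) : Prop :=
  ∃ φ : ((Fin 2 → ℝ) × (Fin 2 → ℝ)) → ℝ, ContDiff ℝ (⊤ : ℕ∞) φ ∧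
    ∀ q p : Fin 2 → ℝ, poisson F H q p = φ (q, p) * H q p

theorem IsGeneralizedFirstIntegral.poisson_eq_zero {F H : (Fin 2 → ℝ) → (Fin 2 → ℝ) → ℝ}
    (hF : IsGeneralizedFirstIntegral F H) {q p : Fin 2 → ℝ} (hH : H q p = 0) :
    poisson F H q p = 0 := by
  obtain ⟨φ, -, hφ⟩ := hF
  rw [hφ, hH, mul_zero]

section PartialDerivatives

variable (A1 A2 : ℝ) (q p : Fin 2 → ℝ)

theorem pderivQ_Fint_zero : pderivQ (Fint A1) 0 q p =
    (1 / 144) * (2 * p 0 - p 1) ^ 2 * exp (-(q 0) / 2 - 7 * q 1) +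
      A1 / 2 * exp (q 0 / 2 + q 1) := by
  simp (disch := fun_prop) [pderivQ, Fint, update_apply]
  ring

theorem pderivQ_Fint_one : pderivQ (Fint A1) 1 q p =
    (7 / 72) * (2 * p 0 - p 1) ^ 2 * exp (-(q 0) / 2 - 7 * q 1) +
      A1 * exp (q 0 / 2 + q 1) := by
  simp (disch := fun_prop) [pderivQ, Fint, update_apply]
  ring

theorem pderivP_Fint_zero : pderivP (Fint A1) 0 q p =
    -(1 / 18) * (2 * p 0 - p 1) * exp (-(q 0) / 2 - 7 * q 1) := by
  simp (disch := fun_prop) [pderivP, Fint, update_apply]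
  ring

theorem pderivP_Fint_one : pderivP (Fint A1) 1 q p =
    (1 / 36) * (2 * p 0 - p 1) * exp (-(q 0) / 2 - 7 * q 1) := by
  simp (disch := fun_prop) [pderivP, Fint, update_apply]
  ring

theorem pderivQ_Ham_zero : pderivQ (Ham A1 A2) 0 q p =
    -(exp (q 0 + 4 * q 1))⁻¹ * ((1 / 9) * (p 0 + p 1) ^ 2 - p 0 ^ 2 / 2 - p 1 ^ 2 / 8) -
      A2 * exp (-(q 1)) * exp (q 0 + 4 * q 1) := by
  simp (disch := fun_prop) [pderivQ, Ham, update_apply, ← exp_neg]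
  ring

theorem pderivQ_Ham_one : pderivQ (Ham A1 A2) 1 q p =
    -4 * (exp (q 0 + 4 * q 1))⁻¹ * ((1 / 9) * (p 0 + p 1) ^ 2 - p 0 ^ 2 / 2 - p 1 ^ 2 / 8) -
      (4 * A1 * exp (-(q 0)) + 3 * A2 * exp (-(q 1))) * exp (q 0 + 4 * q 1) := by
  simp (disch := fun_prop) [pderivQ, Ham, update_apply, ← exp_neg]
  ring

theorem pderivP_Ham_zero : pderivP (Ham A1 A2) 0 q p =
    (exp (q 0 + 4 * q 1))⁻¹ * ((2 / 9) * (p 0 + p 1) - p 0) := by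
  simp (disch := fun_prop) [pderivP, Ham, update_apply]
  ring

theorem pderivP_Ham_one : pderivP (Ham A1 A2) 1 q p =
    (exp (q 0 + 4 * q 1))⁻¹ * ((2 / 9) * (p 0 + p 1) - p 1 / 4) := by
  simp (disch := fun_prop) [pderivP, Ham, update_apply]
  ring

end PartialDerivatives

noncomputable def bracketMultiplier (q p : Fin 2 → ℝ) : ℝ :=
  -(1 / 36) * (2 * p 0 - p 1) * exp (-(q 0) / 2 - 7 * q 1)

theorem contDiff_bracketMultiplier :
    ContDiff ℝ (⊤ : ℕ∞) fun x : (Fin 2 → ℝ) × (Fin 2 → ℝ) => bracketMultiplier x.1 x.2 := by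
  unfold bracketMultiplier
  fun_prop

theorem poisson_Fint_Ham (A1 A2 : ℝ) (q p : Fin 2 → ℝ) :
    poisson (Fint A1) (Ham A1 A2) q p = bracketMultiplier q p * Ham A1 A2 q p := by
  have hexp : exp (q 0 / 2 + q 1) * (exp (q 0 + 4 * q 1))⁻¹ =
      exp (-(q 0) / 2 - 7 * q 1) * exp (-(q 0)) * exp (q 0 + 4 * q 1) := by
    rw [← exp_neg, ← exp_add, ← exp_add, ← exp_add]
    ring_nf
  simp only [poisson, Fin.sum_univ_two, pderivQ_Fint_zero, pderivQ_Fint_one, pderivP_Fint_zero,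
    pderivP_Fint_one, pderivQ_Ham_zero, pderivQ_Ham_one, pderivP_Ham_zero, pderivP_Ham_one,
    bracketMultiplier, Ham]
  linear_combination (-(A1 * (2 * p 0 - p 1)) / 12) * hexp

theorem two_eight_generalized_first_integral_general
    (A1 A2 : ℝ) :
    (∃ φ : ((Fin 2 → ℝ) × (Fin 2 → ℝ)) → ℝ, ContDiff ℝ (⊤ : ℕ∞) φ ∧
      ∀ q p : Fin 2 → ℝ,
        poisson (Fint A1) (Ham A1 A2) q p = φ (q, p) * Ham A1 A2 q p) ∧
    (∀ q p : Fin 2 → ℝ, Ham A1 A2 q p = 0 → poisson (Fint A1) (Ham A1 A2) q p = 0) := by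
  have hF : IsGeneralizedFirstIntegral (Fint A1) (Ham A1 A2) :=
    ⟨_, contDiff_bracketMultiplier, poisson_Fint_Ham A1 A2⟩
  exact ⟨hF, fun _ _ => hF.poisson_eq_zero⟩

/-- `F` is a generalized first integral of `H`: `{F,H} = φ·H` for a smooth `φ`;
in particular `{F,H}` vanishes on the zero set of `H`. -/
theorem two_eight_generalized_first_integral
    (A1 A2 : ℝ) (hA1 : 0 < A1) (hA2 : 0 < A2) :
    (∃ φ : ((Fin 2 → ℝ) × (Fin 2 → ℝ)) → ℝ, ContDiff ℝ (⊤ : ℕ∞) φ ∧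
      ∀ q p : Fin 2 → ℝ,
        poisson (Fint A1) (Ham A1 A2) q p = φ (q, p) * Ham A1 A2 q p) ∧
    (∀ q p : Fin 2 → ℝ, Ham A1 A2 q p = 0 → poisson (Fint A1) (Ham A1 A2) q p = 0) :=
  two_eight_generalized_first_integral_general A1 A2
end

section
/- Let r ≥ 2 and let d_1,…,d_r be positive real numbers with n := d_1+⋯+d_r > 1. Then J(d,d) = n/(n−1) > 0, and for every nonzero p ∈ ℝ^r with p_1+⋯+p_r = 0 one has J(p,p) = −Σ_i p_i²/d_i < 0. Consequently J is a nondegenerate quadratic form on ℝ^r of Lorentz signature (1, r−1): ℝ^r is the direct sum of the line spanned by d = (d_1,…,d_r), on which J is positive, and the hyperplane {p : Σ_i p_i = 0}, on which J is negative definite. -/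
/-!
`J(p, d) = (Σ pᵢ)/(n−1)`, in particular `J(d, d) = n/(n−1)`, while on the hyperplane
`Σ pᵢ = 0` the first term of `J` vanishes, leaving the negative definite diagonal form
`−Σ pᵢ²/dᵢ`. Nondegeneracy follows: `J(p, ·) = 0` forces `Σ pᵢ = J(p, d)·(n−1) = 0`, and
then `0 = J(p, p) = −Σ pᵢ²/dᵢ`. In a splitting `p = c·d + q`, summing the
coordinates forces `c = (Σ pᵢ)/n`.
-/

open Finset

/-- The symmetric bilinear form `J(a,b) = (Σaᵢ)(Σbᵢ)/(n−1) − Σ aᵢbᵢ/dᵢ` with `n = Σ dᵢ`. -/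
noncomputable def Jbil {r : ℕ} (d : Fin r → ℝ) (a b : Fin r → ℝ) : ℝ :=
  (1 / ((∑ i, d i) - 1)) * (∑ i, a i) * (∑ i, b i) - ∑ i, a i * b i / d i

theorem Jbil_apply_weights {r : ℕ} {d : Fin r → ℝ} (hd : ∀ i, d i ≠ 0) (hn : ∑ i, d i ≠ 1)
    (p : Fin r → ℝ) : Jbil d p d = (∑ i, p i) / ((∑ i, d i) - 1) := by
  have hn' : (∑ i, d i) - 1 ≠ 0 := sub_ne_zero.mpr hn
  have hpd : ∀ i, p i * d i / d i = p i := fun i => mul_div_cancel_right₀ _ (hd i)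
  simp only [Jbil, hpd]
  field_simp
  ring

theorem Jbil_of_sum_eq_zero {r : ℕ} (d : Fin r → ℝ) {p : Fin r → ℝ} (hp : ∑ i, p i = 0)
    (q : Fin r → ℝ) : Jbil d p q = -∑ i, p i * q i / d i := by
  simp [Jbil, hp]

theorem sum_sq_div_pos {ι : Type*} [Fintype ι] {d p : ι → ℝ} (hd : ∀ i, 0 < d i)
    (hp : p ≠ 0) : 0 < ∑ i, p i ^ 2 / d i := by
  obtain ⟨i, hi⟩ := Function.ne_iff.mp hp
  exact sum_pos' (fun j _ => div_nonneg (sq_nonneg _) (hd j).le)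
    ⟨i, mem_univ i, div_pos (sq_pos_of_ne_zero hi) (hd i)⟩

theorem Jbil_self_neg_of_sum_eq_zero {r : ℕ} {d : Fin r → ℝ} (hd : ∀ i, 0 < d i)
    {p : Fin r → ℝ} (hp : ∑ i, p i = 0) (hp0 : p ≠ 0) : Jbil d p p < 0 := by
  rw [Jbil_of_sum_eq_zero d hp, neg_lt_zero]
  simpa only [← sq] using sum_sq_div_pos hd hp0

theorem Jbil_nondegenerate {r : ℕ} {d : Fin r → ℝ} (hd : ∀ i, 0 < d i) (hn : ∑ i, d i ≠ 1)
    {p : Fin r → ℝ} (hp : ∀ b, Jbil d p b = 0) : p = 0 := by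
  have hsum : ∑ i, p i = 0 := by
    have h := hp d
    rw [Jbil_apply_weights (fun i => (hd i).ne') hn, div_eq_zero_iff] at h
    exact h.resolve_right (sub_ne_zero.mpr hn)
  by_contra hp0
  exact (Jbil_self_neg_of_sum_eq_zero hd hsum hp0).ne (hp p)

theorem existsUnique_smul_add_of_sum_eq_zero {ι K : Type*} [Fintype ι] [Field K]
    {d : ι → K} (hn : ∑ i, d i ≠ 0) (p : ι → K) :
    ∃! x : K × (ι → K), p = x.1 • d + x.2 ∧ ∑ i, x.2 i = 0 := by
  have hsum : ∀ (c : K) (q : ι → K), ∑ i, (c • d + q) i = c * ∑ i, d i + ∑ i, q i := by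
    intro c q
    simp [sum_add_distrib, mul_sum]
  refine ⟨((∑ i, p i) / ∑ i, d i, p - ((∑ i, p i) / ∑ i, d i) • d), ⟨by simp, ?_⟩, ?_⟩
  · have h := hsum ((∑ i, p i) / ∑ i, d i) (p - ((∑ i, p i) / ∑ i, d i) • d)
    rw [add_sub_cancel, div_mul_cancel₀ _ hn] at h
    linear_combination -h
  · rintro ⟨a, q⟩ ⟨rfl, hq⟩
    have ha : a = (∑ i, (a • d + q) i) / ∑ i, d i := by
      rw [hsum, hq, add_zero, mul_div_cancel_right₀ _ hn]
    rw [← ha, add_sub_cancel_left]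

theorem Jbil_lorentz_signature_general
    (r : ℕ) (d : Fin r → ℝ) (hd : ∀ i, 0 < d i)
    (hn : 1 < ∑ i, d i) :
    Jbil d d d = (∑ i, d i) / ((∑ i, d i) - 1) ∧
    0 < Jbil d d d ∧
    (∀ p : Fin r → ℝ, (∑ i, p i) = 0 →
      (Jbil d p p = -∑ i, (p i) ^ 2 / d i ∧ (p ≠ 0 → Jbil d p p < 0))) ∧
    (∀ p : Fin r → ℝ, (∀ b : Fin r → ℝ, Jbil d p b = 0) → p = 0) ∧
    (∀ p : Fin r → ℝ, ∃! x : ℝ × (Fin r → ℝ), p = x.1 • d + x.2 ∧ (∑ i, x.2 i) = 0) := by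
  have hdd := Jbil_apply_weights (fun i => (hd i).ne') hn.ne' d
  refine ⟨hdd, ?_, fun p hp => ⟨?_, Jbil_self_neg_of_sum_eq_zero hd hp⟩,
    fun p => Jbil_nondegenerate hd hn.ne', existsUnique_smul_add_of_sum_eq_zero (by linarith)⟩
  · rw [hdd]
    exact div_pos (by linarith) (by linarith)
  · simp only [Jbil_of_sum_eq_zero d hp, sq]

/-- `J` has Lorentz signature `(1, r−1)`: it is positive on the line spanned by `d`
(with `J(d,d) = n/(n−1)`), negative definite on the hyperplane `{Σᵢ pᵢ = 0}`
(with `J(p,p) = −Σ pᵢ²/dᵢ` there), nondegenerate, and `ℝ^r` is the direct sum of the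
line `ℝ·d` and that hyperplane. -/
theorem Jbil_lorentz_signature
    (r : ℕ) (hr : 2 ≤ r) (d : Fin r → ℝ) (hd : ∀ i, 0 < d i)
    (hn : 1 < ∑ i, d i) :
    Jbil d d d = (∑ i, d i) / ((∑ i, d i) - 1) ∧
    0 < Jbil d d d ∧
    (∀ p : Fin r → ℝ, (∑ i, p i) = 0 →
      (Jbil d p p = -∑ i, (p i) ^ 2 / d i ∧ (p ≠ 0 → Jbil d p p < 0))) ∧
    (∀ p : Fin r → ℝ, (∀ b : Fin r → ℝ, Jbil d p b = 0) → p = 0) ∧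
    (∀ p : Fin r → ℝ, ∃! x : ℝ × (Fin r → ℝ), p = x.1 • d + x.2 ∧ (∑ i, x.2 i) = 0) :=
  Jbil_lorentz_signature_general r d hd hn
end
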